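/- Let db be a database instance and q = ∃u(q(u)) a self-join-free Boolean conjunctive query with an acyclic attack graph. For every repair r of db there exists a superfrugal repair r* of db such that, for every sequence c of constants of length |u|, if r* ⊨ q(c) then r ⊨ q(c). -/

import Mathlib

open scoped Classical

/-! ## Variables, constants, relation names -/

abbrev Var : Type := ℕ
abbrev RelName : Type := ℕ

/-- A term: a variable or a constant (a non-negative rational). -/
inductive Trm : Type where
  | var : Var → Trm
  | const : ℚ≥0 → Trm
deriving DecidableEq

/-- An atom `R(x̲, y)`: relation name, primary-key arguments, remaining arguments. -/
structure DBAtom : Type where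
  rel : RelName
  keyArgs : List Trm
  nonkeyArgs : List Trm
deriving DecidableEq, Inhabited

/-- A fact: an atom without variables. -/
structure DBFact : Type where
  rel : RelName
  keyArgs : List ℚ≥0
  nonkeyArgs : List ℚ≥0
deriving DecidableEq

def Trm.var? : Trm → Option Var
  | .var v => some v
  | .const _ => none

def Trm.const? : Trm → Option ℚ≥0
  | .var _ => none
  | .const c => some c

def DBAtom.keyVars (F : DBAtom) : Finset Var := (F.keyArgs.filterMap Trm.var?).toFinset

def DBAtom.allVars (F : DBAtom) : Finset Var :=
  ((F.keyArgs ++ F.nonkeyArgs).filterMap Trm.var?).toFinset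

def DBAtom.notkeyVars (F : DBAtom) : Finset Var := F.allVars \ F.keyVars

def qVars (q : List DBAtom) : Finset Var := q.foldr (fun F s => F.allVars ∪ s) ∅

/-- Self-join-free: pairwise distinct relation names. -/
def SelfJoinFree (q : List DBAtom) : Prop := (q.map DBAtom.rel).Nodup

def KeyEqual (f g : DBFact) : Prop := f.rel = g.rel ∧ f.keyArgs = g.keyArgs

def DBConsistent (s : Finset DBFact) : Prop :=
  ∀ f ∈ s, ∀ g ∈ s, KeyEqual f g → f = g

/-- A repair: an inclusion-maximal consistent subset. -/
def IsRepair (db r : Finset DBFact) : Prop :=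
  r ⊆ db ∧ DBConsistent r ∧
    ∀ s : Finset DBFact, r ⊆ s → s ⊆ db → DBConsistent s → s = r

/-! ## Valuations (partial maps from variables to constants) -/

abbrev Assignment : Type := Var → Option ℚ≥0

def Assignment.Dom (θ : Assignment) : Set Var := {v | θ v ≠ none}

def Assignment.ExtendsA (μ θ : Assignment) : Prop :=
  ∀ (v : Var) (c : ℚ≥0), θ v = some c → μ v = some c

noncomputable def Assignment.restrict (θ : Assignment) (S : Set Var) : Assignment :=
  fun v => if v ∈ S then θ v else none

def emptyAssignment : Assignment := fun _ => none

/-- Combination of two valuations (the first takes precedence). -/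
def Assignment.comb (θ μ : Assignment) : Assignment :=
  fun v => (θ v).orElse (fun _ => μ v)

def applyTrm (θ : Assignment) : Trm → Trm
  | .var v => (θ v).elim (Trm.var v) Trm.const
  | .const c => .const c

def applyAtom (θ : Assignment) (F : DBAtom) : DBAtom :=
  ⟨F.rel, F.keyArgs.map (applyTrm θ), F.nonkeyArgs.map (applyTrm θ)⟩

def applyQ (θ : Assignment) (q : List DBAtom) : List DBAtom := q.map (applyAtom θ)

def DBAtom.toFact? (F : DBAtom) : Option DBFact := do
  let ks ← F.keyArgs.mapM Trm.const?
  let ns ← F.nonkeyArgs.mapM Trm.const?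
  pure (DBFact.mk F.rel ks ns)

def AtomIn (s : Finset DBFact) (F : DBAtom) : Prop := ∃ f ∈ s, F.toFact? = some f

/-- `(s, θ) ⊨ q`: θ extends to a valuation over dom(θ) ∪ vars(q) mapping all atoms of q into s. -/
def Entails (s : Finset DBFact) (θ : Assignment) (q : List DBAtom) : Prop :=
  ∃ μ : Assignment, μ.Dom = θ.Dom ∪ ↑(qVars q) ∧ μ.ExtendsA θ ∧
    ∀ F ∈ q, AtomIn s (applyAtom μ F)

/-! ## Functional dependencies -/

def FDSatT (N : Set (Var → ℚ≥0)) (X Y : Finset Var) : Prop :=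
  ∀ t₁ ∈ N, ∀ t₂ ∈ N, (∀ x ∈ X, t₁ x = t₂ x) → ∀ y ∈ Y, t₁ y = t₂ y

/-- Standard logical implication of functional dependencies. -/
def FDImp (fds : Set (Finset Var × Finset Var)) (X Y : Finset Var) : Prop :=
  ∀ N : Set (Var → ℚ≥0), (∀ fd ∈ fds, FDSatT N fd.1 fd.2) → FDSatT N X Y

def FDSet (q : List DBAtom) : Set (Finset Var × Finset Var) :=
  {p | ∃ F ∈ q, p = (F.keyVars, F.allVars)}

def keycl (F : DBAtom) (q : List DBAtom) : Set Var :=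
  {x | x ∈ qVars q ∧ FDImp (FDSet (q.erase F)) F.keyVars {x}}

/-! ## Attacks and the attack graph -/

def AdjIn (q : List DBAtom) (a b : Var) : Prop :=
  ∃ G ∈ q, a ∈ G.allVars ∧ b ∈ G.allVars

/-- Atom F attacks variable x in q. -/
def AttacksVar (q : List DBAtom) (F : DBAtom) (x : Var) : Prop :=
  ∃ l : List Var, (∀ v ∈ l, v ∉ keycl F q) ∧
    (∃ h, l.head? = some h ∧ h ∈ F.notkeyVars) ∧
    l.getLast? = some x ∧ l.Chain' (AdjIn q)

def AttacksAtom (q : List DBAtom) (F G : DBAtom) : Prop :=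
  ∃ x ∈ G.allVars, AttacksVar q F x

def Unattacked (q : List DBAtom) (v : Var) : Prop := ∀ F ∈ q, ¬ AttacksVar q F v

/-- The list order of q is a topological sort of its (hence acyclic) attack graph. -/
def IsTopoSort (q : List DBAtom) : Prop :=
  ∀ i j : Fin q.length, q.get i ≠ q.get j →
    AttacksAtom q (q.get i) (q.get j) → (i : ℕ) < (j : ℕ)

/-! ## Embeddings and ∀embeddings (relative to the list order as topological sort) -/

def uVars (q : List DBAtom) (ℓ : ℕ) : Finset Var := qVars (q.take ℓ)

def headKey : List DBAtom → Finset Var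
  | [] => ∅
  | F :: _ => F.keyVars

/-- ℓ-embedding of q in db. -/
def IsLEmb (q : List DBAtom) (db : Finset DBFact) (ℓ : ℕ) (θ : Assignment) : Prop :=
  θ.Dom = ↑(uVars q ℓ) ∧ Entails db θ q

/-- ℓ-∀embedding of q in db. -/
def IsForallEmb (q : List DBAtom) (db : Finset DBFact) : ℕ → Assignment → Prop
  | 0, θ => IsLEmb q db 0 θ ∧ ∀ r, IsRepair db r → Entails r emptyAssignment q
  | (ℓ + 1), θ =>
      IsLEmb q db (ℓ + 1) θ ∧
      (∀ r, IsRepair db r →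
        Entails r (θ.restrict (↑(uVars q ℓ) ∪ ↑(headKey (q.drop ℓ)))) (q.drop ℓ)) ∧
      IsForallEmb q db ℓ (θ.restrict ↑(uVars q ℓ))

/-- An embedding of q in s: a valuation over vars(q) mapping all atoms of q into s. -/
def IsEmbedding (q : List DBAtom) (s : Finset DBFact) (θ : Assignment) : Prop :=
  θ.Dom = ↑(qVars q) ∧ ∀ F ∈ q, AtomIn s (applyAtom θ F)

/-- Superfrugal repair: every embedding of q in r is a ∀embedding of q in db. -/
def Superfrugal (q : List DBAtom) (db r : Finset DBFact) : Prop :=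
  IsRepair db r ∧ ∀ θ, IsEmbedding q r θ → IsForallEmb q db q.length θ

/-! ## FD satisfaction by sets of valuations; maximal consistent subsets (MCS) -/

def AgreeOn (θ₁ θ₂ : Assignment) (X : Finset Var) : Prop := ∀ x ∈ X, θ₁ x = θ₂ x

def SatFD (N : Set Assignment) (X Y : Finset Var) : Prop :=
  ∀ θ₁ ∈ N, ∀ θ₂ ∈ N, AgreeOn θ₁ θ₂ X → AgreeOn θ₁ θ₂ Y

def SatFDs (N : Set Assignment) (q : List DBAtom) : Prop :=
  ∀ fd ∈ FDSet q, SatFD N fd.1 fd.2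

/-- Maximal consistent subset of a set M of embeddings. -/
def IsMCS (q : List DBAtom) (M N : Set Assignment) : Prop :=
  N ⊆ M ∧ SatFDs N q ∧ ∀ N', N ⊆ N' → N' ⊆ M → SatFDs N' q → N' = N

/-! ## Aggregate operators -/

structure AggOp : Type where
  app : Multiset ℚ≥0 → ℚ
  nonneg : ∀ X : Multiset ℚ≥0, X ≠ 0 → 0 ≤ app X

noncomputable def AggOp.appNN (A : AggOp) (X : Multiset ℚ≥0) : ℚ≥0 := (A.app X).toNNRat

def AggOp.Assoc (A : AggOp) : Prop :=
  ∀ X Y : Multiset ℚ≥0, X ≠ 0 → A.app (X + Y) = A.app (A.appNN X ::ₘ Y)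

def AggOp.Mono (A : AggOp) : Prop :=
  ∀ x x' : List ℚ≥0, x ≠ [] → List.Forall₂ (· ≤ ·) x x' →
    ∀ Y : Multiset ℚ≥0, A.app ↑x ≤ A.app (↑x' + Y)

def evalTrm (θ : Assignment) : Trm → ℚ≥0
  | .var v => (θ v).getD 0
  | .const c => c

/-- The multiset of r-values over a (finite) set of valuations. -/
noncomputable def valsOf (N : Set Assignment) (r : Trm) : Multiset ℚ≥0 :=
  if h : N.Finite then h.toFinset.val.map (fun θ => evalTrm θ r) else 0

/-- Primitive numerical term: a (numerical) variable of the query, or a constant. -/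
def PrimTerm (q : List DBAtom) (r : Trm) : Prop :=
  (∃ v, r = Trm.var v ∧ v ∈ qVars q) ∨ (∃ c, r = Trm.const c)

/-! ## Branches and ∀key-embeddings -/

/-- γ is a branch of the ℓ-∀embedding θ. -/
def IsBranch (q : List DBAtom) (db : Finset DBFact) (ℓ : ℕ) (θ γ : Assignment) : Prop :=
  γ.ExtendsA θ ∧
  (∀ v ∈ γ.Dom \ θ.Dom, Unattacked (applyQ θ (q.drop ℓ)) v) ∧
  (∃ μ, IsForallEmb q db q.length μ ∧ μ.ExtendsA γ)

/-- γ is an (ℓ+1)-∀key-embedding: a branch of θ with domain dom(θ) ∪ key(F_{ℓ+1}). -/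
def IsKeyEmb (q : List DBAtom) (db : Finset DBFact) (ℓ : ℕ) (θ γ : Assignment) : Prop :=
  IsBranch q db ℓ θ γ ∧ γ.Dom = θ.Dom ∪ ↑(headKey (q.drop ℓ))

/-- M(θ): all ∀embeddings of q in db extending θ. -/
def Mset (q : List DBAtom) (db : Finset DBFact) (θ : Assignment) : Set Assignment :=
  {μ | IsForallEmb q db q.length μ ∧ μ.ExtendsA θ}

/-! ## Weakly connected components of the attack graph -/

def UndirectedEdge (p : List DBAtom) (F G : DBAtom) : Prop :=
  F ∈ p ∧ G ∈ p ∧ (AttacksAtom p F G ∨ AttacksAtom p G F)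

/-- S is a maximal weakly connected component of the attack graph of p. -/
def IsWCC (p : List DBAtom) (S : Set DBAtom) : Prop :=
  ∃ F₀ ∈ p, S = {G | Relation.ReflTransGen (UndirectedEdge p) F₀ G}

/-! ## rifi, sequential proofs, n-minimality -/

/-- rifi(q, s, V): valuations over V extending to a valuation over vars(q) mapping q into s. -/
def rifi (q : List DBAtom) (s : Finset DBFact) (V : Finset Var) : Set Assignment :=
  {θ | θ.Dom = ↑V ∧ ∃ μ : Assignment, μ.Dom = ↑(qVars q) ∧ μ.ExtendsA θ ∧
      ∀ F ∈ q, AtomIn s (applyAtom μ F)}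

/-- A sequential proof of FD(p) ⊨ Z → w. -/
def IsSeqProof (p : List DBAtom) (Z : Finset Var) (w : Var) (l : List DBAtom) : Prop :=
  (∀ F ∈ l, F ∈ p) ∧
  (∀ i : Fin l.length, (l.get i).keyVars ⊆ Z ∪ qVars (l.take i.1)) ∧
  w ∈ Z ∪ qVars l

/-- n-minimal repair (with X = vars(q)). -/
def NMinimal (q : List DBAtom) (db r : Finset DBFact) : Prop :=
  IsRepair db r ∧
  ¬ ∃ s : Finset DBFact, IsRepair db s ∧
      (∀ θ, IsEmbedding q s θ → IsEmbedding q r θ) ∧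
      (∃ μ, IsEmbedding q r μ ∧ ¬ IsEmbedding q s μ)

/-! ## Descending chains for aggregate operators -/

def DescChain {α β : Type*} [LT β] (F : Multiset α → β) (s t : α) : Prop :=
  ∀ i : ℕ, F (s ::ₘ Multiset.replicate (i + 1) t) < F (s ::ₘ Multiset.replicate i t)

def BoundedBy {α β : Type*} [LT β] (F : Multiset α → β) (s t : α) (m : ℕ → α) : Prop :=
  ∀ i j : ℕ, 1 ≤ j → ∀ k' k : ℕ, k' ≤ k → k ≤ i →
    F (s ::ₘ Multiset.replicate k' t) <
      F (Multiset.replicate j (m i) + (s ::ₘ Multiset.replicate k t))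

def HasBoundedDescChain {α β : Type*} [LT β] (F : Multiset α → β) : Prop :=
  ∃ s t, DescChain F s t ∧ ∃ m : ℕ → α, BoundedBy F s t m


/-! Let `r*` be a repair whose set of embeddings of `q` is minimal among those of repairs and
contained in that of `r`, and let `θ` be an embedding of `q` in `r*`. Suppose a repair does not
satisfy `F_{ℓ+1} ∧ … ∧ F_n` under the values of `θ` on `u_ℓ ∪ key(F_{ℓ+1})`. Taking the facts of all
other relations from `r*` keeps this failure; among such failing repairs choose `h` with fewest
facts outside `r*`. Then every embedding `θ'` of `q` in `h` is one in `r*`: otherwise swap a fact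
`θ'(F) ∉ r*` for its key-equal fact in `r*`. The new repair is closer to `r*`, so it has a
witness `μ`, and `θ'` on the variables attacked by `F`, `μ` elsewhere, is a witness in `h`: both
map `q \ {F}` into the consistent `h` and agree on `key(F)`, hence on `keycl(F, q)`, and by
acyclicity `F` attacks no variable on which `θ` was fixed. By minimality of `r*`, `θ` itself is
then an embedding in `h`, contradicting the failure. -/

namespace Trm

theorem mem_filterMap_var? {l : List Trm} {v : Var} :
    v ∈ l.filterMap Trm.var? ↔ Trm.var v ∈ l := by
  simp only [List.mem_filterMap]
  constructor
  · rintro ⟨(w | c), ht, h⟩ <;> simp only [Trm.var?, Option.some.injEq, reduceCtorEq] at h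
    exact h ▸ ht
  · exact fun h => ⟨_, h, rfl⟩

theorem mapM_const?_map_applyTrm (θ : Assignment) (l : List Trm) :
    (l.map (applyTrm θ)).mapM Trm.const? =
      if ∀ v, Trm.var v ∈ l → θ v ≠ none then some (l.map (evalTrm θ)) else none := by
  induction l with
  | nil => simp
  | cons a l ih =>
    rcases a with v | c
    · rcases hv : θ v with _ | c <;> simp_all [applyTrm, evalTrm, Trm.const?]
      split_ifs <;> simp
    · simp_all [applyTrm, evalTrm, Trm.const?]
      split_ifs <;> simp

end Trm

namespace DBAtom

theorem mem_allVars {F : DBAtom} {v : Var} :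
    v ∈ F.allVars ↔ Trm.var v ∈ F.keyArgs ∨ Trm.var v ∈ F.nonkeyArgs := by
  rw [allVars, List.mem_toFinset, Trm.mem_filterMap_var?, List.mem_append]

theorem mem_keyVars {F : DBAtom} {v : Var} : v ∈ F.keyVars ↔ Trm.var v ∈ F.keyArgs := by
  rw [keyVars, List.mem_toFinset, Trm.mem_filterMap_var?]

theorem keyVars_subset_allVars (F : DBAtom) : F.keyVars ⊆ F.allVars :=
  fun _ hv => mem_allVars.2 (Or.inl (mem_keyVars.1 hv))

end DBAtom

/-- `θ(F)` as a fact; unassigned variables are read as `0`, so this is `θ(F)` only when `θ` is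
defined on all variables of `F`. -/
def factOf (θ : Assignment) (F : DBAtom) : DBFact :=
  ⟨F.rel, F.keyArgs.map (evalTrm θ), F.nonkeyArgs.map (evalTrm θ)⟩

section Facts

variable {θ μ : Assignment} {F : DBAtom}

theorem atomIn_applyAtom_iff {s : Finset DBFact} :
    AtomIn s (applyAtom θ F) ↔ (∀ v ∈ F.allVars, θ v ≠ none) ∧ factOf θ F ∈ s := by
  simp only [AtomIn, DBAtom.toFact?, applyAtom, Trm.mapM_const?_map_applyTrm, DBAtom.mem_allVars,
    or_imp, forall_and]
  split_ifs with hk hn <;> simp_all [factOf]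

theorem map_evalTrm_eq_iff {l : List Trm} :
    l.map (evalTrm θ) = l.map (evalTrm μ) ↔
      ∀ v, Trm.var v ∈ l → (θ v).getD 0 = (μ v).getD 0 := by
  rw [List.map_inj_left]
  refine ⟨fun h v hv => h _ hv, fun h t ht => ?_⟩
  cases t with
  | var v => exact h v ht
  | const c => rfl

theorem factOf_eq_iff :
    factOf θ F = factOf μ F ↔ ∀ v ∈ F.allVars, (θ v).getD 0 = (μ v).getD 0 := by
  simp only [factOf, DBFact.mk.injEq, true_and, map_evalTrm_eq_iff, DBAtom.mem_allVars, or_imp,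
    forall_and]

theorem factOf_congr (h : ∀ v ∈ F.allVars, θ v = μ v) : factOf θ F = factOf μ F :=
  factOf_eq_iff.2 fun v hv => by rw [h v hv]

theorem keyEqual_factOf_iff :
    KeyEqual (factOf θ F) (factOf μ F) ↔ ∀ v ∈ F.keyVars, (θ v).getD 0 = (μ v).getD 0 := by
  simp only [KeyEqual, factOf, true_and, map_evalTrm_eq_iff, DBAtom.mem_keyVars]

end Facts

namespace Assignment

variable {θ μ : Assignment} {S T : Set Var}

theorem eq_of_getD_eq (hdom : θ.Dom = μ.Dom) {v : Var} (h : (θ v).getD 0 = (μ v).getD 0) :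
    θ v = μ v := by
  have hnone : θ v = none ↔ μ v = none := by
    simpa [Dom] using (Set.ext_iff.1 hdom v).not
  cases hθ : θ v <;> cases hμ : μ v <;> simp_all

theorem restrict_apply (v : Var) : θ.restrict S v = if v ∈ S then θ v else none := rfl

theorem dom_restrict : (θ.restrict S).Dom = S ∩ θ.Dom := by
  ext v
  by_cases h : v ∈ S <;> simp [Dom, restrict_apply, h]

theorem restrict_restrict_of_subset (h : T ⊆ S) : (θ.restrict S).restrict T = θ.restrict T := by
  funext v
  by_cases hT : v ∈ T
  · simp [restrict_apply, hT, h hT]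
  · simp [restrict_apply, hT]

theorem extendsA_restrict : θ.ExtendsA (θ.restrict S) := by
  intro v c h
  by_cases hv : v ∈ S <;> simp_all [restrict_apply]

theorem restrict_eq_self (h : θ.Dom ⊆ S) : θ.restrict S = θ := by
  funext v
  by_cases hv : v ∈ S
  · simp [restrict_apply, hv]
  · simpa [restrict_apply, hv, Dom, eq_comm] using mt (@h v) hv

end Assignment

section QueryVars

variable {q p : List DBAtom} {v : Var}

theorem mem_qVars : v ∈ qVars q ↔ ∃ F ∈ q, v ∈ F.allVars := by
  induction q with
  | nil => simp [qVars]
  | cons F q ih =>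
    change v ∈ F.allVars ∪ qVars q ↔ _
    simp [ih]

theorem qVars_append : qVars (p ++ q) = qVars p ∪ qVars q := by
  ext v
  simp only [mem_qVars, Finset.mem_union, List.mem_append, or_and_right, exists_or]

theorem qVars_subset_of_subset (h : ∀ F ∈ p, F ∈ q) : qVars p ⊆ qVars q := fun _ hv =>
  let ⟨F, hF, hv⟩ := mem_qVars.1 hv
  mem_qVars.2 ⟨F, h F hF, hv⟩

theorem allVars_subset_qVars {F : DBAtom} (hF : F ∈ q) : F.allVars ⊆ qVars q :=
  fun _ hv => mem_qVars.2 ⟨F, hF, hv⟩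

theorem uVars_union_qVars_drop (ℓ : ℕ) : uVars q ℓ ∪ qVars (q.drop ℓ) = qVars q := by
  rw [uVars, ← qVars_append, List.take_append_drop]

theorem uVars_length : uVars q q.length = qVars q := by
  rw [uVars, List.take_length]

theorem headKey_subset_qVars_take_one (p : List DBAtom) : headKey p ⊆ qVars (p.take 1) := by
  cases p with
  | nil => simp [headKey]
  | cons F p =>
    exact (DBAtom.keyVars_subset_allVars F).trans (allVars_subset_qVars (by simp))

end QueryVars

/-- The variables fixed by `θ` in the `ℓ+1`-st clause of `IsForallEmb`: `u_ℓ ∪ key(F_{ℓ+1})`. -/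
def pinnedVars (q : List DBAtom) (ℓ : ℕ) : Set Var :=
  ↑(uVars q ℓ) ∪ ↑(headKey (q.drop ℓ))

theorem pinnedVars_subset_uVars_succ (q : List DBAtom) (ℓ : ℕ) :
    pinnedVars q ℓ ⊆ ↑(uVars q (ℓ + 1)) := by
  rw [pinnedVars, uVars, uVars, List.take_add, qVars_append, Finset.coe_union]
  exact Set.union_subset_union_right _ (by exact_mod_cast headKey_subset_qVars_take_one _)

theorem uVars_subset_qVars (q : List DBAtom) (ℓ : ℕ) : uVars q ℓ ⊆ qVars q :=
  qVars_subset_of_subset fun _ => List.mem_of_mem_take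

theorem pinnedVars_subset_qVars (q : List DBAtom) (ℓ : ℕ) : pinnedVars q ℓ ⊆ ↑(qVars q) :=
  (pinnedVars_subset_uVars_succ q ℓ).trans (by exact_mod_cast uVars_subset_qVars q (ℓ + 1))

section Embeddings

variable {q p : List DBAtom} {s t : Finset DBFact} {θ τ : Assignment}

theorem isEmbedding_iff : IsEmbedding q s θ ↔ θ.Dom = qVars q ∧ ∀ F ∈ q, factOf θ F ∈ s := by
  refine and_congr_right fun hdom => forall₂_congr fun F hF => ?_
  rw [atomIn_applyAtom_iff, and_iff_right_iff_imp]
  intro _ v hv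
  exact (hdom.symm ▸ allVars_subset_qVars hF hv : v ∈ θ.Dom)

theorem IsEmbedding.factOf_mem (hθ : IsEmbedding q s θ) {F : DBAtom} (hF : F ∈ q) :
    factOf θ F ∈ s :=
  (isEmbedding_iff.1 hθ).2 F hF

theorem IsEmbedding.mono (hθ : IsEmbedding q s θ) (hst : s ⊆ t) : IsEmbedding q t θ :=
  isEmbedding_iff.2 ⟨hθ.1, fun _ hF => hst (hθ.factOf_mem hF)⟩

theorem IsEmbedding.entails (hθ : IsEmbedding q s θ) (hτ : θ.ExtendsA τ) (hp : ∀ F ∈ p, F ∈ q)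
    (hdom : τ.Dom ∪ ↑(qVars p) = ↑(qVars q)) : Entails s τ p :=
  ⟨θ, hθ.1.trans hdom.symm, hτ, fun F hF => hθ.2 F (hp F hF)⟩

end Embeddings

namespace KeyEqual

variable {f g k : DBFact}

theorem refl (f : DBFact) : KeyEqual f f := ⟨rfl, rfl⟩

theorem symm (h : KeyEqual f g) : KeyEqual g f := ⟨h.1.symm, h.2.symm⟩

theorem trans (h₁ : KeyEqual f g) (h₂ : KeyEqual g k) : KeyEqual f k :=
  ⟨h₁.1.trans h₂.1, h₁.2.trans h₂.2⟩

end KeyEqual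

section Repairs

variable {db r r₁ r₂ : Finset DBFact}

theorem DBConsistent.mono {s t : Finset DBFact} (ht : DBConsistent t) (h : s ⊆ t) :
    DBConsistent s :=
  fun f hf g hg => ht f (h hf) g (h hg)

theorem isRepair_iff :
    IsRepair db r ↔ r ⊆ db ∧ DBConsistent r ∧ ∀ f ∈ db, ∃ g ∈ r, KeyEqual f g := by
  refine and_congr_right fun hsub => and_congr_right fun hcons => ⟨fun hmax f hf => ?_, ?_⟩
  · by_contra! hno
    have hins : DBConsistent (insert f r) := by
      intro a ha b hb hab
      rcases Finset.mem_insert.1 ha with rfl | ha' <;> rcases Finset.mem_insert.1 hb with rfl | hb'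
      · rfl
      · exact absurd hab (hno b hb')
      · exact absurd hab.symm (hno a ha')
      · exact hcons a ha' b hb' hab
    have := hmax _ (Finset.subset_insert f r) (Finset.insert_subset hf hsub) hins
    exact hno f (this ▸ Finset.mem_insert_self f r) (KeyEqual.refl f)
  · intro hfull s hrs hsdb hs
    refine (Finset.Subset.antisymm ?_ hrs)
    intro f hf
    obtain ⟨g, hg, hfg⟩ := hfull f (hsdb hf)
    exact hs f hf g (hrs hg) hfg ▸ hg

theorem IsRepair.swap (hr : IsRepair db r) {A B : DBFact} (hA : A ∈ r) (hB : B ∈ db)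
    (hAB : KeyEqual A B) : IsRepair db (insert B (r.erase A)) := by
  obtain ⟨hsub, hcons, hfull⟩ := isRepair_iff.1 hr
  have hBr : ∀ g ∈ r.erase A, ¬ KeyEqual B g := fun g hg hBg =>
    (Finset.mem_erase.1 hg).1 (hcons g (Finset.mem_of_mem_erase hg) A hA (hAB.trans hBg).symm)
  refine isRepair_iff.2 ⟨Finset.insert_subset hB ((Finset.erase_subset A r).trans hsub), ?_, ?_⟩
  · intro f hf g hg hfg
    rcases Finset.mem_insert.1 hf with rfl | hf' <;> rcases Finset.mem_insert.1 hg with rfl | hg'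
    · rfl
    · exact absurd hfg (hBr g hg')
    · exact absurd hfg.symm (hBr f hf')
    · exact (hcons.mono (Finset.erase_subset A r)) f hf' g hg' hfg
  · intro f hf
    obtain ⟨g, hg, hfg⟩ := hfull f hf
    by_cases hgA : g = A
    · exact ⟨B, Finset.mem_insert_self _ _, hfg.trans (hgA ▸ hAB)⟩
    · exact ⟨g, Finset.mem_insert_of_mem (Finset.mem_erase.2 ⟨hgA, hg⟩), hfg⟩

theorem IsRepair.piecewise (h₁ : IsRepair db r₁) (h₂ : IsRepair db r₂) (P : RelName → Prop) :
    IsRepair db (r₁.filter (fun f => P f.rel) ∪ r₂.filter (fun f => ¬ P f.rel)) := by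
  obtain ⟨hsub₁, hcons₁, hfull₁⟩ := isRepair_iff.1 h₁
  obtain ⟨hsub₂, hcons₂, hfull₂⟩ := isRepair_iff.1 h₂
  refine isRepair_iff.2 ⟨Finset.union_subset ((Finset.filter_subset _ _).trans hsub₁)
    ((Finset.filter_subset _ _).trans hsub₂), ?_, fun f hf => ?_⟩
  · intro f hf g hg hfg
    simp only [Finset.mem_union, Finset.mem_filter] at hf hg
    rcases hf with ⟨hf, hPf⟩ | ⟨hf, hPf⟩ <;> rcases hg with ⟨hg, hPg⟩ | ⟨hg, hPg⟩
    · exact hcons₁ f hf g hg hfg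
    · exact absurd (hfg.1 ▸ hPf) hPg
    · exact absurd (hfg.1 ▸ hPg) hPf
    · exact hcons₂ f hf g hg hfg
  · by_cases hP : P f.rel
    · obtain ⟨g, hg, hfg⟩ := hfull₁ f hf
      exact ⟨g, Finset.mem_union_left _ (Finset.mem_filter.2 ⟨hg, hfg.1 ▸ hP⟩), hfg⟩
    · obtain ⟨g, hg, hfg⟩ := hfull₂ f hf
      exact ⟨g, Finset.mem_union_right _ (Finset.mem_filter.2 ⟨hg, hfg.1 ▸ hP⟩), hfg⟩

end Repairs

section KeyClosure

variable {q : List DBAtom} {F : DBAtom}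

theorem fdSatT_pair {t₁ t₂ : Var → ℚ≥0} {X Y : Finset Var}
    (h : (∀ x ∈ X, t₁ x = t₂ x) → ∀ y ∈ Y, t₁ y = t₂ y) : FDSatT {t₁, t₂} X Y := by
  rintro a (rfl | rfl) b (rfl | rfl) hab
  · exact fun _ _ => rfl
  · exact h hab
  · exact fun y hy => (h (fun x hx => (hab x hx).symm) y hy).symm
  · exact fun _ _ => rfl

/-- The two valuations, made total, form a relation satisfying `FD(q \ {F})`, so the implication
defining `keycl(F, q)` applies to them. -/
theorem eqOn_keycl {s : Finset DBFact} (hs : DBConsistent s) {θ μ : Assignment}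
    (hdom : θ.Dom = μ.Dom) (hθ : ∀ G ∈ q.erase F, factOf θ G ∈ s)
    (hμ : ∀ G ∈ q.erase F, factOf μ G ∈ s) (hkey : KeyEqual (factOf θ F) (factOf μ F)) :
    ∀ w ∈ keycl F q, θ w = μ w := by
  rintro w ⟨-, himp⟩
  refine Assignment.eq_of_getD_eq hdom ?_
  have hfds : ∀ fd ∈ FDSet (q.erase F),
      FDSatT {fun v => (θ v).getD 0, fun v => (μ v).getD 0} fd.1 fd.2 := by
    rintro _ ⟨G, hG, rfl⟩
    refine fdSatT_pair fun hk => factOf_eq_iff.1 ?_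
    exact hs _ (hθ G hG) _ (hμ G hG) (keyEqual_factOf_iff.2 hk)
  exact himp _ hfds _ (Set.mem_insert _ _) _ (Set.mem_insert_of_mem _ rfl)
    (keyEqual_factOf_iff.1 hkey) w (Finset.mem_singleton_self w)

theorem key_mem_keycl (hF : F ∈ q) {v : Var} (hv : v ∈ F.keyVars) : v ∈ keycl F q :=
  ⟨allVars_subset_qVars hF (F.keyVars_subset_allVars hv),
    fun _ _ _ _ _ _ hagr _ hy => Finset.mem_singleton.1 hy ▸ hagr _ hv⟩

end KeyClosure

section Attacks

variable {q : List DBAtom} {F : DBAtom}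

theorem AttacksVar.not_mem_keycl {x : Var} (h : AttacksVar q F x) : x ∉ keycl F q := by
  obtain ⟨l, hnk, -, hlast, -⟩ := h
  exact hnk x (List.mem_of_getLast? hlast)

theorem attacksVar_of_mem_notkeyVars {w : Var} (h₁ : w ∈ F.notkeyVars) (h₂ : w ∉ keycl F q) :
    AttacksVar q F w :=
  ⟨[w], by simpa using h₂, ⟨w, rfl, h₁⟩, rfl, List.isChain_singleton w⟩

theorem AttacksVar.of_adjIn {u v : Var} (h : AttacksVar q F u) (hadj : AdjIn q u v)
    (hv : v ∉ keycl F q) : AttacksVar q F v := by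
  obtain ⟨l, hnk, ⟨x, hx, hxF⟩, hlast, hchain⟩ := h
  refine ⟨l ++ [v], ?_, ⟨x, by simp [List.head?_append, hx], hxF⟩, List.getLast?_concat, ?_⟩
  · simpa [or_imp, forall_and] using ⟨hnk, hv⟩
  · refine List.isChain_append.2 ⟨hchain, List.isChain_singleton v, ?_⟩
    simp_all

theorem mem_keycl_of_not_attacksVar (hF : F ∈ q) {G : DBAtom} (hG : G ∈ q)
    (hGF : G = F ∨ ∃ u ∈ G.allVars, AttacksVar q F u) {v : Var} (hv : v ∈ G.allVars)
    (hnv : ¬ AttacksVar q F v) : v ∈ keycl F q := by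
  by_contra hk
  rcases hGF with rfl | ⟨u, hu, hFu⟩
  · by_cases hkey : v ∈ G.keyVars
    · exact hk (key_mem_keycl hF hkey)
    · exact hnv (attacksVar_of_mem_notkeyVars (Finset.mem_sdiff.2 ⟨hv, hkey⟩) hk)
  · exact hnv (hFu.of_adjIn ⟨G, hG, hu, hv⟩ hk)

theorem IsTopoSort.not_attacksAtom (htopo : IsTopoSort q) (hsjf : SelfJoinFree q) {ℓ : ℕ}
    {G : DBAtom} (hF : F ∈ q.drop ℓ) (hG : G ∈ q.take ℓ) : ¬ AttacksAtom q F G := by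
  intro hatt
  have hne : F ≠ G := fun h => List.disjoint_take_drop (hsjf.of_map _) le_rfl hG (h ▸ hF)
  obtain ⟨i, hi, rfl⟩ := List.mem_iff_getElem.1 hF
  obtain ⟨j, hj, rfl⟩ := List.mem_iff_getElem.1 hG
  simp only [List.getElem_drop, List.getElem_take] at hne hatt
  simp only [List.length_drop, List.length_take] at hi hj
  have := htopo ⟨ℓ + i, by omega⟩ ⟨j, by omega⟩ hne hatt
  simp only at this
  omega

theorem IsTopoSort.not_attacksVar_of_mem_pinnedVars (htopo : IsTopoSort q)
    (hsjf : SelfJoinFree q) {ℓ : ℕ} (hF : F ∈ q.drop ℓ) {v : Var} (hv : v ∈ pinnedVars q ℓ) :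
    ¬ AttacksVar q F v := by
  intro hatt
  rcases hv with hv | hv
  · obtain ⟨G, hG, hvG⟩ := mem_qVars.1 hv
    exact htopo.not_attacksAtom hsjf hF hG ⟨v, hvG, hatt⟩
  · obtain ⟨G, rest, hdrop⟩ := List.exists_cons_of_ne_nil (List.ne_nil_of_mem hF)
    rw [hdrop] at hv hF
    rcases List.mem_cons.1 hF with rfl | hFrest
    · exact hatt.not_mem_keycl (key_mem_keycl (List.mem_of_mem_drop (hdrop ▸ List.mem_cons_self)) hv)
    · have hrest : rest = q.drop (ℓ + 1) := by
        rw [← List.drop_drop, hdrop, List.drop_one, List.tail_cons]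
      have hGtake : G ∈ q.take (ℓ + 1) := by
        rw [List.take_add, hdrop]
        simp
      exact htopo.not_attacksAtom hsjf (hrest ▸ hFrest) hGtake
        ⟨v, G.keyVars_subset_allVars hv, hatt⟩

end Attacks

noncomputable def attackPatch (q : List DBAtom) (F : DBAtom) (θ μ : Assignment) : Assignment :=
  fun v => if AttacksVar q F v then θ v else μ v

section Exchange

variable {q : List DBAtom} {F : DBAtom} {s : Finset DBFact} {θ μ : Assignment}

theorem isEmbedding_attackPatch (hs : DBConsistent s) (hθ : IsEmbedding q s θ) (hF : F ∈ q)
    (hμdom : μ.Dom = qVars q) (hμ : ∀ G ∈ q.erase F, factOf μ G ∈ s)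
    (hkey : KeyEqual (factOf θ F) (factOf μ F)) : IsEmbedding q s (attackPatch q F θ μ) := by
  have hkeycl := eqOn_keycl hs (hθ.1.trans hμdom.symm)
    (fun G hG => hθ.factOf_mem (List.mem_of_mem_erase hG)) hμ hkey
  refine isEmbedding_iff.2 ⟨?_, fun G hG => ?_⟩
  · ext v
    change attackPatch q F θ μ v ≠ none ↔ _
    rw [attackPatch]
    split_ifs
    · exact Set.ext_iff.1 hθ.1 v
    · exact Set.ext_iff.1 hμdom v
  by_cases hGF : G = F ∨ ∃ u ∈ G.allVars, AttacksVar q F u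
  · rw [factOf_congr (μ := θ) fun v hv => ?_]
    · exact hθ.factOf_mem hG
    by_cases hav : AttacksVar q F v
    · exact if_pos hav
    · rw [attackPatch, if_neg hav]
      exact (hkeycl v (mem_keycl_of_not_attacksVar hF hG hGF hv hav)).symm
  · simp only [not_or, not_exists, not_and] at hGF
    rw [factOf_congr (θ := attackPatch q F θ μ) (μ := μ) fun v hv => if_neg (hGF.2 v hv)]
    exact hμ G ((List.mem_erase_of_ne hGF.1).2 hG)

theorem exists_isEmbedding_of_swap (hsjf : SelfJoinFree q) (hs : DBConsistent s)
    (hθ : IsEmbedding q s θ) (hF : F ∈ q) {B : DBFact} (hB : KeyEqual (factOf θ F) B)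
    (hμ : IsEmbedding q (insert B (s.erase (factOf θ F))) μ) :
    ∃ ν, IsEmbedding q s ν ∧ ∀ v, ¬ AttacksVar q F v → ν v = μ v := by
  have hother : ∀ G ∈ q.erase F, factOf μ G ∈ s := by
    intro G hG
    have hGq := List.mem_of_mem_erase hG
    have hGF : G.rel ≠ F.rel := fun h =>
      ((hsjf.of_map _).mem_erase_iff.1 hG).1 (List.inj_on_of_nodup_map hsjf hGq hF h)
    rcases Finset.mem_insert.1 (hμ.factOf_mem hGq) with h | h
    · exact absurd ((congrArg DBFact.rel h).trans hB.1.symm) hGF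
    · exact Finset.mem_of_mem_erase h
  rcases Finset.mem_insert.1 (hμ.factOf_mem hF) with hμF | hμF
  · exact ⟨attackPatch q F θ μ, isEmbedding_attackPatch hs hθ hF hμ.1 hother (hμF ▸ hB),
      fun v hv => if_neg hv⟩
  · refine ⟨μ, isEmbedding_iff.2 ⟨hμ.1, fun G hG => ?_⟩, fun _ _ => rfl⟩
    by_cases hGF : G = F
    · exact hGF ▸ Finset.mem_of_mem_erase hμF
    · exact hother G ((List.mem_erase_of_ne hGF).2 hG)

end Exchange

theorem Finset.card_sdiff_insert_erase_lt {α : Type*} [DecidableEq α] {h s : Finset α} {a b : α}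
    (ha : a ∈ h) (has : a ∉ s) (hb : b ∈ s) : (insert b (h.erase a) \ s).card < (h \ s).card := by
  rw [Finset.insert_sdiff_of_mem _ hb, Finset.erase_sdiff_comm]
  exact Finset.card_erase_lt_of_mem (Finset.mem_sdiff.2 ⟨ha, has⟩)

def AgreeOutside (p : List DBAtom) (h s : Finset DBFact) : Prop :=
  ∀ f : DBFact, f.rel ∉ p.map DBAtom.rel → (f ∈ h ↔ f ∈ s)

theorem Assignment.eq_of_extendsA_restrict {θ μ : Assignment} {S : Set Var} {v : Var}
    (hext : μ.ExtendsA (θ.restrict S)) (hv : v ∈ S) (hθv : θ v ≠ none) : μ v = θ v := by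
  obtain ⟨c, hc⟩ := Option.ne_none_iff_exists'.1 hθv
  rw [hc]
  exact hext v c (by rw [Assignment.restrict_apply, if_pos hv, hc])

section Blocking

variable {q : List DBAtom} {db s₀ h : Finset DBFact} {θ : Assignment} {ℓ : ℕ}

theorem dom_restrict_pinnedVars_union (hθ : θ.Dom = qVars q) :
    (θ.restrict (pinnedVars q ℓ)).Dom ∪ ↑(qVars (q.drop ℓ)) = ↑(qVars q) := by
  have hhead : (↑(headKey (q.drop ℓ)) : Set Var) ⊆ ↑(qVars (q.drop ℓ)) := by
    exact_mod_cast (headKey_subset_qVars_take_one _).trans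
      (qVars_subset_of_subset fun _ => List.mem_of_mem_take)
  rw [Assignment.dom_restrict, hθ, Set.inter_eq_left.2 (pinnedVars_subset_qVars q ℓ), pinnedVars,
    Set.union_assoc, Set.union_eq_right.2 hhead, ← Finset.coe_union, uVars_union_qVars_drop]

theorem exists_isEmbedding_of_entails (hsjf : SelfJoinFree q) (hθ : IsEmbedding q s₀ θ)
    (hagree : AgreeOutside (q.drop ℓ) h s₀)
    (hent : Entails h (θ.restrict (pinnedVars q ℓ)) (q.drop ℓ)) :
    ∃ μ, IsEmbedding q h μ ∧ μ.ExtendsA (θ.restrict (pinnedVars q ℓ)) := by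
  obtain ⟨μ, hdom, hext, hatoms⟩ := hent
  refine ⟨μ, isEmbedding_iff.2 ⟨hdom.trans (dom_restrict_pinnedVars_union hθ.1), fun G hG => ?_⟩,
    hext⟩
  rcases List.mem_append.1 ((List.take_append_drop ℓ q).symm ▸ hG) with hGt | hGd
  · have hμθ : ∀ v ∈ G.allVars, μ v = θ v := fun v hv =>
      Assignment.eq_of_extendsA_restrict hext (Or.inl (allVars_subset_qVars hGt hv))
        (hθ.1.symm ▸ allVars_subset_qVars hG hv : v ∈ θ.Dom)
    rw [factOf_congr hμθ]
    refine (hagree _ fun hrel => ?_).2 (hθ.factOf_mem hG)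
    obtain ⟨F, hF, hFG⟩ := List.mem_map.1 hrel
    exact List.disjoint_take_drop (hsjf.of_map _) le_rfl hGt
      (List.inj_on_of_nodup_map hsjf (List.mem_of_mem_drop hF) hG hFG ▸ hF)
  · exact (atomIn_applyAtom_iff.1 (hatoms G hGd)).2

theorem isEmbedding_of_blocking (htopo : IsTopoSort q) (hsjf : SelfJoinFree q)
    (hs₀ : IsRepair db s₀) (hθ : IsEmbedding q s₀ θ) (hh : IsRepair db h)
    (hagree : AgreeOutside (q.drop ℓ) h s₀)
    (hblock : ¬ Entails h (θ.restrict (pinnedVars q ℓ)) (q.drop ℓ))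
    (hcloser : ∀ h', IsRepair db h' → AgreeOutside (q.drop ℓ) h' s₀ →
      (h' \ s₀).card < (h \ s₀).card → Entails h' (θ.restrict (pinnedVars q ℓ)) (q.drop ℓ))
    {θ' : Assignment} (hθ' : IsEmbedding q h θ') : IsEmbedding q s₀ θ' := by
  by_contra hθ's₀
  obtain ⟨F, hF, hA⟩ : ∃ F ∈ q, factOf θ' F ∉ s₀ := by
    by_contra! hall
    exact hθ's₀ (isEmbedding_iff.2 ⟨hθ'.1, hall⟩)
  have hAh := hθ'.factOf_mem hF
  have hFrel : F.rel ∈ (q.drop ℓ).map DBAtom.rel := by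
    by_contra hn
    exact hA ((hagree _ hn).1 hAh)
  obtain ⟨B, hB, hAB⟩ := (isRepair_iff.1 hs₀).2.2 _ (hh.1 hAh)
  have hagree' : AgreeOutside (q.drop ℓ) (insert B (h.erase (factOf θ' F))) s₀ := fun f hf => by
    have hfB : f ≠ B := fun e => hf (e ▸ hAB.1 ▸ hFrel)
    have hfA : f ≠ factOf θ' F := fun e => hf (e ▸ hFrel)
    rw [Finset.mem_insert, Finset.mem_erase, ← hagree f hf]
    tauto
  obtain ⟨μ, hμ, hμτ⟩ := exists_isEmbedding_of_entails hsjf hθ hagree'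
    (hcloser _ (hh.swap hAh (hs₀.1 hB) hAB) hagree' (Finset.card_sdiff_insert_erase_lt hAh hA hB))
  obtain ⟨ν, hν, hνμ⟩ := exists_isEmbedding_of_swap hsjf hh.2.1 hθ' hF hAB hμ
  have hFd : F ∈ q.drop ℓ := by
    obtain ⟨G, hG, hGF⟩ := List.mem_map.1 hFrel
    rwa [← List.inj_on_of_nodup_map hsjf (List.mem_of_mem_drop hG) hF hGF]
  refine hblock (hν.entails (fun v c hvc => ?_) (fun _ => List.mem_of_mem_drop)
    (dom_restrict_pinnedVars_union hθ.1))
  have hv : v ∈ pinnedVars q ℓ := by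
    by_contra hv
    simp [Assignment.restrict_apply, hv] at hvc
  rw [hνμ v (htopo.not_attacksVar_of_mem_pinnedVars hsjf hFd hv)]
  exact hμτ v c hvc

end Blocking

theorem IsEmbedding.entails_empty {q : List DBAtom} {s : Finset DBFact} {θ : Assignment}
    (hθ : IsEmbedding q s θ) : Entails s emptyAssignment q :=
  hθ.entails (fun _ _ h => absurd h (by simp [emptyAssignment])) (fun _ => id)
    (by simp [Assignment.Dom, emptyAssignment])

theorem isLEmb_restrict {q : List DBAtom} {db : Finset DBFact} {θ : Assignment}
    (hθ : IsEmbedding q db θ) (ℓ : ℕ) : IsLEmb q db ℓ (θ.restrict ↑(uVars q ℓ)) := by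
  have hdom : (θ.restrict ↑(uVars q ℓ)).Dom = ↑(uVars q ℓ) := by
    rw [Assignment.dom_restrict, hθ.1]
    exact Set.inter_eq_left.2 (by exact_mod_cast uVars_subset_qVars q ℓ)
  refine ⟨hdom, hθ.entails Assignment.extendsA_restrict (fun _ => id) ?_⟩
  rw [hdom, ← Finset.coe_union, Finset.union_eq_right.2 (uVars_subset_qVars q ℓ)]

theorem exists_nMinimal_le (q : List DBAtom) {db r : Finset DBFact} (hr : IsRepair db r) :
    ∃ s, NMinimal q db s ∧ ∀ θ, IsEmbedding q s θ → IsEmbedding q r θ := by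
  let S : Set (Finset DBFact) := {t | IsRepair db t ∧ ∀ θ, IsEmbedding q t θ → IsEmbedding q r θ}
  have hS : S.Finite :=
    db.powerset.finite_toSet.subset fun t ht => Finset.mem_powerset.2 ht.1.1
  obtain ⟨s, ⟨hs, hsr⟩, hmin⟩ :=
    hS.exists_minimalFor (fun t => {θ | IsEmbedding q t θ}) S ⟨r, hr, fun _ => id⟩
  refine ⟨s, ⟨hs, ?_⟩, hsr⟩
  rintro ⟨h, hh, hhs, θ, hθs, hθh⟩
  exact hθh (hmin ⟨hh, fun θ hθ => hsr θ (hhs θ hθ)⟩ hhs hθs)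

section NMinimal

variable {q : List DBAtom} {db s r : Finset DBFact} {θ : Assignment}

theorem NMinimal.isEmbedding_of_subset (hs : NMinimal q db s) {h : Finset DBFact}
    (hh : IsRepair db h) (hsub : ∀ θ, IsEmbedding q h θ → IsEmbedding q s θ)
    (hθ : IsEmbedding q s θ) : IsEmbedding q h θ := by
  by_contra hθh
  exact hs.2 ⟨h, hh, hsub, θ, hθ, hθh⟩

theorem NMinimal.entails_of_agreeOutside (hs : NMinimal q db s) (htopo : IsTopoSort q)
    (hsjf : SelfJoinFree q) (hθ : IsEmbedding q s θ) (ℓ : ℕ) {h : Finset DBFact}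
    (hh : IsRepair db h) (hagree : AgreeOutside (q.drop ℓ) h s) :
    Entails h (θ.restrict (pinnedVars q ℓ)) (q.drop ℓ) := by
  induction hn : (h \ s).card using Nat.strong_induction_on generalizing h with
  | _ n ih =>
    by_contra hblock
    have hsub : ∀ θ', IsEmbedding q h θ' → IsEmbedding q s θ' := fun _ =>
      isEmbedding_of_blocking htopo hsjf hs.1 hθ hh hagree hblock
        fun h' hh' hagree' hlt => ih _ (hn ▸ hlt) hh' hagree' rfl
    exact hblock ((hs.isEmbedding_of_subset hh hsub hθ).entails Assignment.extendsA_restrict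
      (fun _ => List.mem_of_mem_drop) (dom_restrict_pinnedVars_union hθ.1))

theorem NMinimal.entails_of_isRepair (hs : NMinimal q db s) (htopo : IsTopoSort q)
    (hsjf : SelfJoinFree q) (hθ : IsEmbedding q s θ) (ℓ : ℕ) (hr : IsRepair db r) :
    Entails r (θ.restrict (pinnedVars q ℓ)) (q.drop ℓ) := by
  let P : RelName → Prop := fun R => R ∈ (q.drop ℓ).map DBAtom.rel
  obtain ⟨μ, hdom, hext, hatoms⟩ := hs.entails_of_agreeOutside htopo hsjf hθ ℓ
    (hr.piecewise hs.1 P) fun f hf => by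
      simp only [P, Finset.mem_union, Finset.mem_filter, hf, and_false, false_or, not_false_eq_true,
        and_true]
  refine ⟨μ, hdom, hext, fun F hF => ?_⟩
  obtain ⟨hdef, hmem⟩ := atomIn_applyAtom_iff.1 (hatoms F hF)
  refine atomIn_applyAtom_iff.2 ⟨hdef, ?_⟩
  simp only [Finset.mem_union, Finset.mem_filter] at hmem
  rcases hmem with ⟨hmem, -⟩ | ⟨-, hn⟩
  · exact hmem
  · exact absurd (List.mem_map_of_mem hF) hn

theorem NMinimal.entails_empty (hs : NMinimal q db s) (hθ : IsEmbedding q s θ)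
    (hr : IsRepair db r) : Entails r emptyAssignment q := by
  by_contra hr'
  have hsub : ∀ θ', IsEmbedding q r θ' → IsEmbedding q s θ' := fun _ hθ' =>
    absurd hθ'.entails_empty hr'
  exact hr' (hs.isEmbedding_of_subset hr hsub hθ).entails_empty

theorem NMinimal.isForallEmb (hs : NMinimal q db s) (htopo : IsTopoSort q)
    (hsjf : SelfJoinFree q) (hθ : IsEmbedding q s θ) (ℓ : ℕ) :
    IsForallEmb q db ℓ (θ.restrict ↑(uVars q ℓ)) := by
  have hθdb := hθ.mono hs.1.1
  induction ℓ with
  | zero => exact ⟨isLEmb_restrict hθdb 0, fun r hr => hs.entails_empty hθ hr⟩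
  | succ ℓ ih =>
    refine ⟨isLEmb_restrict hθdb (ℓ + 1), fun r hr => ?_, ?_⟩
    · have := hs.entails_of_isRepair htopo hsjf hθ ℓ hr
      rwa [← Assignment.restrict_restrict_of_subset (pinnedVars_subset_uVars_succ q ℓ)] at this
    · rwa [Assignment.restrict_restrict_of_subset
        (Set.subset_union_left.trans (pinnedVars_subset_uVars_succ q ℓ))]

theorem NMinimal.superfrugal (hs : NMinimal q db s) (htopo : IsTopoSort q)
    (hsjf : SelfJoinFree q) : Superfrugal q db s :=
  ⟨hs.1, fun θ hθ => by
    simpa only [uVars_length, Assignment.restrict_eq_self hθ.1.subset] using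
      hs.isForallEmb htopo hsjf hθ q.length⟩

end NMinimal

/-- For every repair r there is a superfrugal repair r* whose answers
are contained in those of r. -/
theorem stmt1
    (q : List DBAtom) (hsjf : SelfJoinFree q) (htopo : IsTopoSort q)
    (db : Finset DBFact) (r : Finset DBFact) (hr : IsRepair db r) :
    ∃ rstar : Finset DBFact, Superfrugal q db rstar ∧
      ∀ θ : Assignment, IsEmbedding q rstar θ → IsEmbedding q r θ := by
  obtain ⟨s, hs, hsr⟩ := exists_nMinimal_le q hr
  exact ⟨s, hs.superfrugal htopo hsjf, hsr⟩
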